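/- Let H be self-adjoint and bounded below with H + N > 1, and suppose V₂ ∈ W^{1,∞} is such that (H+N)^{1/2} V₂ (H+N)^{-1/2} is a bounded operator on L². If u ∈ C([0,T], L²) solves the integral equation with initial datum φ ∈ H¹_Q = D((H+N)^{1/2}) and V₁ ∈ L^∞, then u ∈ C([0,T], H¹_Q). (Regularity: the H¹_Q solution cannot blow up before the L² solution.) -/

import Mathlib

/-!
Freezing the coefficient `c τ = i⁻¹ ⟪V₁ u τ, u τ⟫` turns the equation for `u` into the *linear*
Volterra equation `x t = U t φ + ∫₀ᵗ U (t - τ) (c τ • V₂) (x τ) dτ`. In any Banach space on which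
`U` acts by a strongly continuous family of contractions this equation has a unique continuous
solution on `[0, T]`: if `K` bounds the coefficient, the `n`-th iterate of the solution map is
Lipschitz with constant `(K T)ⁿ / n!` for the sup norm, so some iterate is a contraction.
Solving it in `H¹_Q`, where `U` and `V₂` restrict, and embedding the solution into `L²` gives a
solution of the `L²` equation, which by uniqueness is `u`.
-/

open MeasureTheory
open scoped InnerProductSpace

noncomputable section

/-- The non-local non-linearity `F(u) = (V₁ u, u) V₂ u`. -/
def nlTerm {E : Type*} [NormedAddCommGroup E] [InnerProductSpace ℂ E]
    (M₁ M₂ : E →L[ℂ] E) (x : E) : E :=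
  ⟪M₁ x, x⟫_ℂ • M₂ x

open Set Function
open scoped NNReal Nat

section VolterraFixedPoint

variable {F : Type*} [NormedAddCommGroup F] {T K : ℝ}

theorem norm_iterate_apply_sub_le_of_volterra (hT : 0 ≤ T) (hK : 0 ≤ K)
    {Φ : C(Icc 0 T, F) → C(Icc 0 T, F)}
    (hΦ : ∀ x y (t : Icc 0 T),
      ‖Φ x t - Φ y t‖ ≤ K * ∫ τ in 0..(t : ℝ), ‖IccExtend hT x τ - IccExtend hT y τ‖)
    (n : ℕ) (x y : C(Icc 0 T, F)) (t : Icc 0 T) :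
    ‖(Φ^[n] x) t - (Φ^[n] y) t‖ ≤ (K * t) ^ n / n ! * dist x y := by
  induction n generalizing t with
  | zero => simpa [← dist_eq_norm] using ContinuousMap.dist_apply_le_dist t
  | succ n ih =>
    have ht : (0 : ℝ) ≤ t := t.2.1
    have hint : ∫ τ in 0..(t : ℝ), ‖IccExtend hT (Φ^[n] x) τ - IccExtend hT (Φ^[n] y) τ‖
        ≤ ∫ τ in 0..(t : ℝ), (K * τ) ^ n / n ! * dist x y := by
      refine intervalIntegral.integral_mono_on ht (Continuous.intervalIntegrable (by fun_prop) _ _)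
        (Continuous.intervalIntegrable (by fun_prop) _ _) fun τ hτ => ?_
      have hτT : τ ∈ Icc 0 T := ⟨hτ.1, hτ.2.trans t.2.2⟩
      rw [IccExtend_of_mem _ _ hτT, IccExtend_of_mem _ _ hτT]
      exact ih ⟨τ, hτT⟩
    have hval : ∫ τ in 0..(t : ℝ), (K * τ) ^ n / n ! * dist x y
        = K ^ n / n ! * dist x y * ((t : ℝ) ^ (n + 1) / (n + 1)) := by
      simp_rw [mul_pow, mul_comm (K ^ n), mul_div_assoc, mul_assoc]
      rw [intervalIntegral.integral_mul_const, integral_pow]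
      ring
    rw [iterate_succ_apply', iterate_succ_apply']
    calc _ ≤ K * ∫ τ in 0..(t : ℝ), ‖IccExtend hT (Φ^[n] x) τ - IccExtend hT (Φ^[n] y) τ‖ :=
          hΦ _ _ t
      _ ≤ K * (K ^ n / n ! * dist x y * ((t : ℝ) ^ (n + 1) / (n + 1))) := by
          rw [← hval]; gcongr
      _ = (K * t) ^ (n + 1) / (n + 1)! * dist x y := by
          rw [Nat.factorial_succ]; push_cast; field_simp; ring

theorem existsUnique_isFixedPt_of_volterra [CompleteSpace F] (hT : 0 ≤ T) (hK : 0 ≤ K)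
    {Φ : C(Icc 0 T, F) → C(Icc 0 T, F)}
    (hΦ : ∀ x y (t : Icc 0 T),
      ‖Φ x t - Φ y t‖ ≤ K * ∫ τ in 0..(t : ℝ), ‖IccExtend hT x τ - IccExtend hT y τ‖) :
    ∃! x, IsFixedPt Φ x := by
  obtain ⟨n, hn⟩ := (FloorSemiring.tendsto_pow_div_factorial_atTop (K * T)).eventually
    (gt_mem_nhds one_pos) |>.exists
  have hdist (x y : C(Icc 0 T, F)) : dist (Φ^[n] x) (Φ^[n] y) ≤ (K * T) ^ n / n ! * dist x y :=
    (ContinuousMap.dist_le (by positivity)).2 fun t => by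
      rw [dist_eq_norm]
      refine (norm_iterate_apply_sub_le_of_volterra hT hK hΦ n x y t).trans ?_
      have ht : (0 : ℝ) ≤ t := t.2.1
      gcongr
      exact t.2.2
  have hΦn : ContractingWith ⟨(K * T) ^ n / n !, by positivity⟩ Φ^[n] := ⟨hn, .of_dist_le_mul hdist⟩
  have : Nonempty C(Icc 0 T, F) := ⟨0⟩
  exact ⟨_, hΦn.isFixedPt_fixedPoint_iterate, fun y hy => hΦn.fixedPoint_unique (hy.iterate n)⟩

end VolterraFixedPoint

section MildSolution

variable {𝕜 X F G : Type*} [NontriviallyNormedField 𝕜] [TopologicalSpace X]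
  [NormedAddCommGroup F] [NormedSpace 𝕜 F] [NormedAddCommGroup G] [NormedSpace 𝕜 G]

theorem continuous_uncurry_apply_of_norm_le {V : X → F →L[𝕜] G} {B : ℝ≥0}
    (hV : ∀ x, Continuous fun t => V t x) (hVb : ∀ t, ‖V t‖ ≤ B) :
    Continuous fun p : X × F => V p.1 p.2 :=
  continuous_prod_of_continuous_lipschitzWith' _ B
    (fun t => (V t).lipschitz.weaken (by exact_mod_cast hVb t)) hV

variable {V A : ℝ → F →L[𝕜] F} {B : ℝ≥0} {η : F} {T : ℝ}

theorem continuous_apply_sub_apply (hV : ∀ x, Continuous fun t => V t x) (hVb : ∀ t, ‖V t‖ ≤ B)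
    {g : ℝ → F} (hg : Continuous g) (t : ℝ) : Continuous fun τ => V (t - τ) (g τ) :=
  (continuous_uncurry_apply_of_norm_le hV hVb).comp ((continuous_const.sub continuous_id).prodMk hg)

variable [NormedSpace ℝ F]

theorem continuous_duhamel (hV : ∀ x, Continuous fun t => V t x) (hVb : ∀ t, ‖V t‖ ≤ B)
    (η : F) {g : ℝ → F} (hg : Continuous g) :
    Continuous fun t => V t η + ∫ τ in 0..t, V (t - τ) (g τ) :=
  (hV η).add <| intervalIntegral.continuous_parametric_intervalIntegral_of_continuous
    (f := fun t τ => V (t - τ) (g τ)) ((continuous_uncurry_apply_of_norm_le hV hVb).comp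
      ((continuous_fst.sub continuous_snd).prodMk (hg.comp continuous_snd))) continuous_id

variable (V A) in
def IsMildSolution (η : F) (T : ℝ) (x : ℝ → F) : Prop :=
  ContinuousOn x (Icc 0 T) ∧ ∀ t ∈ Icc 0 T, x t = V t η + ∫ τ in 0..t, V (t - τ) (A τ (x τ))

theorem IsMildSolution.congr {x y : ℝ → F} (hx : IsMildSolution V A η T x)
    (hxy : EqOn x y (Icc 0 T)) : IsMildSolution V A η T y := by
  refine ⟨hx.1.congr hxy.symm, fun t ht => ?_⟩
  rw [← hxy ht, hx.2 t ht]
  congr 1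
  refine intervalIntegral.integral_congr fun τ hτ => ?_
  rw [uIcc_of_le ht.1] at hτ
  simp only [hxy ⟨hτ.1, hτ.2.trans ht.2⟩]

theorem existsUnique_isMildSolution_IccExtend [CompleteSpace F] (hT : 0 ≤ T)
    (hV : ∀ x, Continuous fun t => V t x) (hVb : ∀ t, ‖V t‖ ≤ B) (hA : Continuous A) (η : F) :
    ∃! x : C(Icc 0 T, F), IsMildSolution V A η T (IccExtend hT x) := by
  obtain ⟨C, hC⟩ := isCompact_Icc.exists_bound_of_continuousOn (hA.continuousOn (s := Icc 0 T))
  have hC0 : 0 ≤ C := (norm_nonneg _).trans (hC 0 ⟨le_rfl, hT⟩)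
  let Φ (x : C(Icc 0 T, F)) : C(Icc 0 T, F) :=
    ⟨fun t => V t η + ∫ τ in 0..(t : ℝ), V (t - τ) (A τ (IccExtend hT x τ)),
      (continuous_duhamel hV hVb η (hA.clm_apply x.continuous.Icc_extend')).comp
        continuous_subtype_val⟩
  have hfix (x : C(Icc 0 T, F)) : IsFixedPt Φ x ↔ IsMildSolution V A η T (IccExtend hT x) := by
    refine ⟨fun h => ⟨x.continuous.Icc_extend'.continuousOn, fun t ht => ?_⟩, fun h => ?_⟩
    · rw [IccExtend_of_mem _ _ ht]
      exact (DFunLike.congr_fun h ⟨t, ht⟩).symm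
    · ext t
      have := h.2 t t.2
      rw [IccExtend_of_mem _ _ t.2] at this
      exact this.symm
  have hlip (x y : C(Icc 0 T, F)) (t : Icc 0 T) : ‖Φ x t - Φ y t‖ ≤
      B * C * ∫ τ in 0..(t : ℝ), ‖IccExtend hT x τ - IccExtend hT y τ‖ := by
    have hint (z : C(Icc 0 T, F)) : IntervalIntegrable
        (fun τ => V (t - τ) (A τ (IccExtend hT z τ))) volume 0 t :=
      (continuous_apply_sub_apply hV hVb (hA.clm_apply z.continuous.Icc_extend') t
        ).intervalIntegrable _ _
    rw [← intervalIntegral.integral_const_mul]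
    simp only [Φ, ContinuousMap.coe_mk, add_sub_add_left_eq_sub,
      ← intervalIntegral.integral_sub (hint x) (hint y), ← map_sub]
    refine intervalIntegral.norm_integral_le_of_norm_le t.2.1 (ae_of_all _ fun τ hτ => ?_)
      (Continuous.intervalIntegrable (by fun_prop) _ _)
    calc _ ≤ ‖V (t - τ)‖ * (‖A τ‖ * ‖IccExtend hT x τ - IccExtend hT y τ‖) :=
          (V _).le_opNorm_of_le ((A τ).le_opNorm _)
      _ ≤ B * (C * ‖IccExtend hT x τ - IccExtend hT y τ‖) := by
          gcongr
          · exact hVb _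
          · exact hC τ ⟨hτ.1.le, hτ.2.trans t.2.2⟩
      _ = _ := by ring
  simpa only [hfix] using existsUnique_isFixedPt_of_volterra hT (by positivity) hlip

theorem IsMildSolution.eqOn [CompleteSpace F] (hT : 0 ≤ T) (hV : ∀ x, Continuous fun t => V t x)
    (hVb : ∀ t, ‖V t‖ ≤ B) (hA : Continuous A) {x y : ℝ → F} (hx : IsMildSolution V A η T x)
    (hy : IsMildSolution V A η T y) : EqOn x y (Icc 0 T) := by
  obtain ⟨_, -, huniq⟩ := existsUnique_isMildSolution_IccExtend hT hV hVb hA η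
  have hrestrict {z : ℝ → F} (hz : IsMildSolution V A η T z) :
      IsMildSolution V A η T
        (IccExtend hT (⟨(Icc 0 T).domRestrict z, hz.1.domRestrict⟩ : C(Icc 0 T, F))) :=
    hz.congr fun t ht => by rw [IccExtend_of_mem _ _ ht]; rfl
  intro t ht
  exact DFunLike.congr_fun ((huniq _ (hrestrict hx)).trans (huniq _ (hrestrict hy)).symm) ⟨t, ht⟩

end MildSolution

theorem IsMildSolution.map {𝕜 F G : Type*} [RCLike 𝕜]
    [NormedAddCommGroup F] [NormedSpace 𝕜 F] [NormedSpace ℝ F] [CompleteSpace F]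
    [NormedAddCommGroup G] [NormedSpace 𝕜 G] [NormedSpace ℝ G] [CompleteSpace G]
    {V A : ℝ → F →L[𝕜] F} {W A' : ℝ → G →L[𝕜] G} {B : ℝ≥0} {η : F} {T : ℝ} (L : F →L[𝕜] G)
    (hLV : ∀ t x, L (V t x) = W t (L x)) (hLA : ∀ t x, L (A t x) = A' t (L x))
    (hV : ∀ x, Continuous fun t => V t x) (hVb : ∀ t, ‖V t‖ ≤ B) (hA : Continuous A)
    {x : ℝ → F} (hx : IsMildSolution V A η T x) : IsMildSolution W A' (L η) T (L ∘ x) := by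
  refine ⟨L.continuous.comp_continuousOn hx.1, fun t ht => ?_⟩
  have hsub : uIcc 0 t ⊆ Icc 0 T := by
    rw [uIcc_of_le ht.1]
    exact Icc_subset_Icc_right ht.2
  have hint : IntervalIntegrable (fun τ => V (t - τ) (A τ (x τ))) volume 0 t :=
    ContinuousOn.intervalIntegrable <|
      (continuous_uncurry_apply_of_norm_le hV hVb).comp_continuousOn <|
        (continuousOn_const.sub continuousOn_id).prodMk (hA.continuousOn.clm_apply (hx.1.mono hsub))
  simp only [comp_apply, ← hLV, ← hLA]
  rw [hx.2 t ht, map_add, L.intervalIntegral_comp_comm hint]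

/-- `E = L²`, and `E₁ = H¹_Q` with the norm `‖(H+N)^{1/2}·‖` is embedded in it by `J`;
`U t = e^{-itH}` restricts to `U₁ t` on `E₁`; `M₁`, `M₂` are multiplication by `V₁`, `V₂`, and
boundedness of `(H+N)^{1/2} V₂ (H+N)^{-1/2}` means that `M₂` restricts to `M₂'` on `E₁`. -/
theorem stmt_10_general {E E₁ : Type*}
    [NormedAddCommGroup E] [InnerProductSpace ℂ E] [CompleteSpace E]
    [NormedAddCommGroup E₁] [InnerProductSpace ℂ E₁] [CompleteSpace E₁]
    (U : ℝ → E →L[ℂ] E)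
    (hUiso : ∀ (t : ℝ) (x : E), ‖U t x‖ = ‖x‖)
    (hUcont : ∀ x : E, Continuous fun t => U t x)
    (U₁ : ℝ → E₁ →L[ℂ] E₁)
    (hU₁iso : ∀ (t : ℝ) (x : E₁), ‖U₁ t x‖ = ‖x‖)
    (hU₁cont : ∀ x : E₁, Continuous fun t => U₁ t x)
    (J : E₁ →L[ℂ] E)
    (hJU : ∀ (t : ℝ) (x : E₁), J (U₁ t x) = U t (J x))
    (M₁ M₂ : E →L[ℂ] E) (M₂' : E₁ →L[ℂ] E₁)
    (hM₂ : ∀ x : E₁, J (M₂' x) = M₂ (J x))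
    (T : ℝ) (hT : 0 < T) (ψ : E₁) (u : ℝ → E)
    (hc : ContinuousOn u (Set.Icc 0 T))
    (he : ∀ t ∈ Set.Icc (0 : ℝ) T,
      u t = U t (J ψ) + (Complex.I)⁻¹ •
        ∫ τ in (0 : ℝ)..t, U (t - τ) (nlTerm M₁ M₂ (u τ))) :
    ∃ w : ℝ → E₁, ContinuousOn w (Set.Icc 0 T) ∧ ∀ t ∈ Set.Icc (0 : ℝ) T, u t = J (w t) := by
  obtain ⟨ū, hū, hūu⟩ : ∃ ū : ℝ → E, Continuous ū ∧ EqOn ū u (Icc 0 T) :=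
    ⟨IccExtend hT.le ((Icc 0 T).domRestrict u), hc.domRestrict.Icc_extend',
      fun t ht => IccExtend_of_mem _ _ ht⟩
  let c (τ : ℝ) : ℂ := Complex.I⁻¹ * ⟪M₁ (ū τ), ū τ⟫_ℂ
  have hcont : Continuous c := by fun_prop
  have hA : Continuous fun τ => c τ • M₂ := hcont.smul continuous_const
  have hA₁ : Continuous fun τ => c τ • M₂' := hcont.smul continuous_const
  have hUb (t : ℝ) : ‖U t‖ ≤ (1 : ℝ≥0) :=
    (U t).opNorm_le_bound zero_le_one fun x => by simp [hUiso]
  have hU₁b (t : ℝ) : ‖U₁ t‖ ≤ (1 : ℝ≥0) :=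
    (U₁ t).opNorm_le_bound zero_le_one fun x => by simp [hU₁iso]
  have hu : IsMildSolution U (fun τ => c τ • M₂) (J ψ) T u := by
    refine ⟨hc, fun t ht => ?_⟩
    rw [he t ht, ← intervalIntegral.integral_smul]
    congr 1
    refine intervalIntegral.integral_congr fun τ hτ => ?_
    rw [uIcc_of_le ht.1] at hτ
    simp only [c, nlTerm, hūu ⟨hτ.1, hτ.2.trans ht.2⟩, smul_apply, mul_smul, map_smul]
  obtain ⟨w, hw, -⟩ := existsUnique_isMildSolution_IccExtend hT.le hU₁cont hU₁b hA₁ ψ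
  have hJw : IsMildSolution U (fun τ => c τ • M₂) (J ψ) T (J ∘ IccExtend hT.le w) :=
    hw.map J hJU (fun τ x => by simp [hM₂]) hU₁cont hU₁b hA₁
  exact ⟨_, hw.1, fun t ht => hu.eqOn hT.le hUcont hUb hA hJw ht⟩

/-- (regularity: the `H¹_Q` solution cannot blow up before the `L²` solution)
Let `H` be self-adjoint and bounded below with `H + N > 1`, generating the unitary group
`U t = e^{-itH}` on `E = L²`.  The space `E₁ = H¹_Q = D((H+N)^{1/2})` is modelled as a
Hilbert space continuously and injectively embedded in `E` by `J` (so that the `H¹_Q` norm is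
`‖(H+N)^{1/2}·‖_{L²}`); the group restricts to a group `U₁` on `E₁` (`J ∘ U₁ t = U t ∘ J`),
`V₁ ∈ L^∞` gives the bounded operator `M₁` on `E`, and `V₂ ∈ W^{1,∞}` is such that
`(H+N)^{1/2} V₂ (H+N)^{-1/2}` is bounded on `L²`, i.e. multiplication by `V₂` restricts to a
bounded operator `M₂'` on `E₁` compatible with `M₂` on `E`.  If `u ∈ C([0,T], L²)` solves the
integral equation with initial datum `φ = J ψ ∈ H¹_Q`, then `u ∈ C([0,T], H¹_Q)`. -/
theorem stmt_10 {E E₁ : Type*}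
    [NormedAddCommGroup E] [InnerProductSpace ℂ E] [CompleteSpace E]
    [NormedAddCommGroup E₁] [InnerProductSpace ℂ E₁] [CompleteSpace E₁]
    (U : ℝ → E →L[ℂ] E) (hU0 : U 0 = 1) (hUadd : ∀ s t : ℝ, U (s + t) = U s * U t)
    (hUiso : ∀ (t : ℝ) (x : E), ‖U t x‖ = ‖x‖)
    (hUcont : ∀ x : E, Continuous fun t => U t x)
    (U₁ : ℝ → E₁ →L[ℂ] E₁) (hU₁0 : U₁ 0 = 1)
    (hU₁add : ∀ s t : ℝ, U₁ (s + t) = U₁ s * U₁ t)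
    (hU₁iso : ∀ (t : ℝ) (x : E₁), ‖U₁ t x‖ = ‖x‖)
    (hU₁cont : ∀ x : E₁, Continuous fun t => U₁ t x)
    (J : E₁ →L[ℂ] E) (hJinj : Function.Injective J)
    (hJU : ∀ (t : ℝ) (x : E₁), J (U₁ t x) = U t (J x))
    (M₁ M₂ : E →L[ℂ] E) (M₂' : E₁ →L[ℂ] E₁)
    (hM₂ : ∀ x : E₁, J (M₂' x) = M₂ (J x))
    (T : ℝ) (hT : 0 < T) (ψ : E₁) (u : ℝ → E)
    (hc : ContinuousOn u (Set.Icc 0 T))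
    (he : ∀ t ∈ Set.Icc (0 : ℝ) T,
      u t = U t (J ψ) + (Complex.I)⁻¹ •
        ∫ τ in (0 : ℝ)..t, U (t - τ) (nlTerm M₁ M₂ (u τ))) :
    ∃ w : ℝ → E₁, ContinuousOn w (Set.Icc 0 T) ∧ ∀ t ∈ Set.Icc (0 : ℝ) T, u t = J (w t) :=
  stmt_10_general U hUiso hUcont U₁ hU₁iso hU₁cont J hJU M₁ M₂ M₂' hM₂ T hT ψ u hc he
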